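/- arXiv:2203.01728 — 4 statements merged into one kernel-verified Lean document; each statement's English description precedes it below -/
import Mathlib

section
/- With p_z0 = p_nz0 = p, the random variable A+R is uniform over {X : Pr(X=0)=p, Pr(X=b)=(1-p)/(q-1) for b≠0}; that is, Pr(A+R=0)=p and Pr(A+R=b)=(1-p)/(q-1) for every nonzero b, regardless of s. -/
/-- With `p_z0 = p_nz0 = p`, the padded value `A + R` has
`Pr(A+R = 0) = p` and `Pr(A+R = b) = (1-p)/(q-1)` for every nonzero `b`,
regardless of `s`. -/
theorem padded_matrix_distribution
    (q : ℕ) (hq : 2 ≤ q) (F : Type) [Field F] [Fintype F] [DecidableEq F]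
    (hcard : Fintype.card F = q)
    (s p : ℝ) (hs : s ∈ Set.Icc (0:ℝ) 1) (hp : p ∈ Set.Icc (0:ℝ) 1)
    (pA : F → ℝ) (pR : F → F → ℝ)
    (hA0 : pA 0 = s)
    (hAnz : ∀ a : F, a ≠ 0 → pA a = (1 - s) / ((q : ℝ) - 1))
    (hR : ∀ a r : F, pR a r = if r = -a then p else (1 - p) / ((q : ℝ) - 1)) :
    ∀ b : F, (∑ a : F, pA a * pR a (b - a))
      = if b = 0 then p else (1 - p) / ((q : ℝ) - 1) := by
  intro b
  have hq1 : (q : ℝ) - 1 ≠ 0 := by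
    have : (2 : ℝ) ≤ (q : ℝ) := by exact_mod_cast hq
    linarith
  have hsum : (∑ a : F, pA a) = 1 := by
    rw [← Finset.add_sum_erase _ _ (Finset.mem_univ (0 : F)), hA0]
    rw [Finset.sum_congr rfl (fun a ha => hAnz a (Finset.ne_of_mem_erase ha))]
    rw [Finset.sum_const, Finset.card_erase_of_mem (Finset.mem_univ _),
      Finset.card_univ, hcard]
    have hq2 : 1 ≤ q := le_trans (by norm_num) hq
    rw [nsmul_eq_mul, Nat.cast_sub hq2]
    push_cast
    field_simp
    ring
  have key : ∀ a : F, pA a * pR a (b - a)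
      = pA a * (if b = 0 then p else (1 - p) / ((q : ℝ) - 1)) := by
    intro a
    rw [hR]
    congr 1
    have h : (b - a = -a) ↔ b = 0 := by
      constructor
      · intro h; linear_combination h
      · intro h; simp [h]
    rw [if_congr h rfl rfl]
  calc (∑ a : F, pA a * pR a (b - a))
      = ∑ a : F, pA a * (if b = 0 then p else (1 - p) / ((q : ℝ) - 1)) :=
        Finset.sum_congr rfl (fun a _ => key a)
    _ = (∑ a : F, pA a) * (if b = 0 then p else (1 - p) / ((q : ℝ) - 1)) := by
        rw [Finset.sum_mul]
    _ = _ := by rw [hsum, one_mul]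
end

section
/- In the dependent sparse one-time pad with parameters p_z0, p_nz0, the mutual information I(A+R; A) equals H_q([S, (1-S)/(q-1), …]) − s·H_q([p_z0, (1-p_z0)/(q-1), …]) − (1-s)·H_q([p_nz0, (1-p_nz0)/(q-1), …]), where S = (p_z0 − p_nz0)s + p_nz0 and H_q([t, (1-t)/(q-1), …]) denotes the q-ary entropy of the distribution with mass t on one symbol and (1-t)/(q-1) on each of the remaining q-1 symbols. -/
open Finset

/-- Shannon mutual information (natural base) of a joint distribution on a
pair of finite alphabets, with the convention `0 · log 0 = 0`, `log 0 = 0`. -/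
noncomputable def MI {α β : Type*} [Fintype α] [Fintype β] (J : α → β → ℝ) : ℝ :=
  ∑ a : α, ∑ b : β,
    J a b * Real.log (J a b / ((∑ b' : β, J a b') * (∑ a' : α, J a' b)))

/-- Entropy (natural base) of the distribution putting mass `t` on one symbol
and `(1-t)/(q-1)` on each of the remaining `q - 1` symbols. -/
noncomputable def Hq (q : ℕ) (t : ℝ) : ℝ :=
  -(t * Real.log t
    + ((q : ℝ) - 1) * ((1 - t) / ((q : ℝ) - 1)) * Real.log ((1 - t) / ((q : ℝ) - 1)))

lemma sum_point {F : Type} [Fintype F] [DecidableEq F] (c : F) (x y : ℝ) :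
    ∑ r : F, (if r = c then x else y) = x + ((Fintype.card F : ℝ) - 1) * y := by
  rw [← Finset.add_sum_erase _ _ (Finset.mem_univ c), if_pos rfl]
  congr 1
  rw [Finset.sum_congr rfl (fun r hr => if_neg (Finset.ne_of_mem_erase hr)),
    Finset.sum_const, Finset.card_erase_of_mem (Finset.mem_univ c), Finset.card_univ,
    nsmul_eq_mul]
  have : Nonempty F := ⟨c⟩
  rw [Nat.cast_sub Fintype.card_pos, Nat.cast_one]

lemma sum_point_ent {F : Type} [Fintype F] [DecidableEq F] (c : F) (x y : ℝ) :
    ∑ r : F, (if r = c then x else y) * Real.log (if r = c then x else y)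
      = x * Real.log x + ((Fintype.card F : ℝ) - 1) * (y * Real.log y) := by
  calc ∑ r : F, (if r = c then x else y) * Real.log (if r = c then x else y)
      = ∑ r : F, (if r = c then x * Real.log x else y * Real.log y) := by
        refine Finset.sum_congr rfl fun r _ => ?_
        split <;> rfl
    _ = _ := sum_point c _ _

lemma sum_shift {F : Type} [AddGroup F] [Fintype F] (a : F) (f : F → ℝ) :
    ∑ b : F, f (b - a) = ∑ r : F, f r :=
  Fintype.sum_equiv (Equiv.subRight a) _ _ (fun _ => rfl)

lemma term_eq (x y P : ℝ) (hx : 0 ≤ x) (hy : 0 ≤ y) (hP : x * y ≠ 0 → 0 < P) :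
    x * y * Real.log ((x * y) / (x * P))
      = x * (y * Real.log y) - x * y * Real.log P := by
  rcases eq_or_lt_of_le hx with h | h
  · simp [← h]
  rcases eq_or_lt_of_le hy with h' | h'
  · simp [← h']
  have hPpos : 0 < P := hP (by positivity)
  rw [Real.log_div (by positivity) (by positivity), Real.log_mul h.ne' h'.ne',
      Real.log_mul h.ne' hPpos.ne']
  ring

/-- In the dependent sparse one-time pad with parameters
`p_z0, p_nz0`, the leakage from the padded matrix is
`I(A+R; A) = H([S, …]) − s·H([p_z0, …]) − (1-s)·H([p_nz0, …])`
with `S = (p_z0 − p_nz0)s + p_nz0`. -/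
theorem leakage_from_padded_matrix
    (q : ℕ) (hq : 2 ≤ q) (F : Type) [Field F] [Fintype F] [DecidableEq F]
    (hcard : Fintype.card F = q)
    (s pz0 pnz0 : ℝ) (hs : s ∈ Set.Icc (0:ℝ) 1)
    (hpz0 : pz0 ∈ Set.Icc (0:ℝ) 1) (hpnz0 : pnz0 ∈ Set.Icc (0:ℝ) 1)
    (pA : F → ℝ) (pR : F → F → ℝ)
    (hA0 : pA 0 = s)
    (hAnz : ∀ a : F, a ≠ 0 → pA a = (1 - s) / ((q : ℝ) - 1))
    (hR0 : ∀ r : F, pR 0 r = if r = 0 then pz0 else (1 - pz0) / ((q : ℝ) - 1))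
    (hRnz : ∀ a : F, a ≠ 0 → ∀ r : F,
      pR a r = if r = -a then pnz0 else (1 - pnz0) / ((q : ℝ) - 1)) :
    -- the joint law of (A, A+R) is (a, b) ↦ Pr(A = a) Pr(R = b - a | A = a)
    MI (fun a b : F => pA a * pR a (b - a))
      = Hq q ((pz0 - pnz0) * s + pnz0) - s * Hq q pz0 - (1 - s) * Hq q pnz0 := by
  obtain ⟨hs0, hs1⟩ := hs
  obtain ⟨hz00, hz01⟩ := hpz0
  obtain ⟨hn00, hn01⟩ := hpnz0
  have hq2 : (2:ℝ) ≤ (q:ℝ) := by exact_mod_cast hq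
  have hQ : (0:ℝ) < (q:ℝ) - 1 := by linarith
  have hQne : ((q:ℝ) - 1) ≠ 0 := ne_of_gt hQ
  have hcardR : ((Fintype.card F : ℝ)) = (q:ℝ) := by exact_mod_cast hcard
  set S : ℝ := (pz0 - pnz0) * s + pnz0 with hSdef
  -- nonnegativity
  have hpAnn : ∀ a : F, 0 ≤ pA a := by
    intro a
    by_cases ha : a = 0
    · rw [ha, hA0]; exact hs0
    · rw [hAnz a ha]; exact div_nonneg (by linarith) (le_of_lt hQ)
  have hpRnn : ∀ a r : F, 0 ≤ pR a r := by
    intro a r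
    by_cases ha : a = 0
    · rw [ha, hR0]; split
      · exact hz00
      · exact div_nonneg (by linarith) (le_of_lt hQ)
    · rw [hRnz a ha]; split
      · exact hn00
      · exact div_nonneg (by linarith) (le_of_lt hQ)
  -- rows of pR sum to 1
  have hone : ∀ a : F, ∑ r : F, pR a r = 1 := by
    intro a
    by_cases ha : a = 0
    · subst ha
      simp only [hR0]
      rw [sum_point (0:F) pz0 _, hcardR]
      field_simp
      ring
    · simp only [hRnz a ha]
      rw [sum_point (-a) pnz0 _, hcardR]
      field_simp
      ring
  have hrow : ∀ a : F, ∑ b : F, pA a * pR a (b - a) = pA a := by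
    intro a
    rw [← Finset.mul_sum, sum_shift a (pR a), hone, mul_one]
  -- column sums
  have hcol : ∀ b : F, (∑ a : F, pA a * pR a (b - a))
      = if b = 0 then S else (1 - S) / ((q:ℝ) - 1) := by
    intro b
    rw [← Finset.add_sum_erase _ _ (Finset.mem_univ (0:F))]
    have herase : ∑ a ∈ Finset.univ.erase (0:F), pA a * pR a (b - a)
        = ((q:ℝ) - 1) * ((1 - s) / ((q:ℝ) - 1) *
            (if b = 0 then pnz0 else (1 - pnz0) / ((q:ℝ) - 1))) := by
      rw [Finset.sum_congr rfl (fun a ha => ?_), Finset.sum_const,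
        Finset.card_erase_of_mem (Finset.mem_univ _), Finset.card_univ, hcard,
        nsmul_eq_mul, Nat.cast_sub (by omega), Nat.cast_one]
      have ha0 : a ≠ 0 := Finset.ne_of_mem_erase ha
      rw [hAnz a ha0, hRnz a ha0]
      congr 1
      have hbe : (b - a = -a) ↔ (b = 0) := by rw [sub_eq_iff_eq_add]; simp
      simp only [hbe]
    rw [herase, hA0, hR0]
    by_cases hb : b = 0
    · simp only [hb, sub_zero, if_pos rfl, ↓reduceIte]
      field_simp
      ring
    · simp only [sub_zero, if_neg hb]
      field_simp
      ring
  -- inner row entropies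
  have hinner : ∀ a : F, (∑ b : F, pR a (b - a) * Real.log (pR a (b - a)))
      = if a = 0 then -Hq q pz0 else -Hq q pnz0 := by
    intro a
    by_cases ha : a = 0
    · subst ha
      rw [if_pos rfl]
      simp only [sub_zero, hR0]
      rw [sum_point_ent (0:F), hcardR]
      simp only [Hq]; ring
    · rw [if_neg ha, sum_shift a (fun r => pR a r * Real.log (pR a r))]
      simp only [hRnz a ha]
      rw [sum_point_ent (-a), hcardR]
      simp only [Hq]; ring
  have hT1 : ∑ a : F, pA a * (∑ b : F, pR a (b - a) * Real.log (pR a (b - a)))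
      = s * (-Hq q pz0) + (1 - s) * (-Hq q pnz0) := by
    simp only [hinner]
    rw [← Finset.add_sum_erase _ _ (Finset.mem_univ (0:F)), if_pos rfl, hA0]
    have herase : ∑ a ∈ Finset.univ.erase (0:F),
        pA a * (if a = 0 then -Hq q pz0 else -Hq q pnz0)
        = ((q:ℝ) - 1) * ((1 - s) / ((q:ℝ) - 1) * (-Hq q pnz0)) := by
      rw [Finset.sum_congr rfl (fun a ha => ?_), Finset.sum_const,
        Finset.card_erase_of_mem (Finset.mem_univ _), Finset.card_univ, hcard,
        nsmul_eq_mul, Nat.cast_sub (by omega), Nat.cast_one]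
      rw [hAnz a (Finset.ne_of_mem_erase ha), if_neg (Finset.ne_of_mem_erase ha)]
    rw [herase]
    field_simp
  have hT2 : ∑ b : F,
      (∑ a : F, pA a * pR a (b - a)) * Real.log (∑ a : F, pA a * pR a (b - a))
      = -Hq q S := by
    simp only [hcol]
    rw [sum_point_ent (0:F), hcardR]
    simp only [Hq]; ring
  have key : ∀ a b : F,
      (pA a * pR a (b - a)) * Real.log ((pA a * pR a (b - a)) /
        ((∑ b' : F, pA a * pR a (b' - a)) * (∑ a' : F, pA a' * pR a' (b - a'))))
      = pA a * (pR a (b - a) * Real.log (pR a (b - a)))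
        - pA a * pR a (b - a) * Real.log (∑ a' : F, pA a' * pR a' (b - a')) := by
    intro a b
    rw [hrow a]
    refine term_eq _ _ _ (hpAnn a) (hpRnn a _) fun hne => ?_
    have h1 : 0 < pA a * pR a (b - a) :=
      lt_of_le_of_ne (mul_nonneg (hpAnn a) (hpRnn a _)) (Ne.symm hne)
    exact lt_of_lt_of_le h1 (Finset.single_le_sum
      (fun a' _ => mul_nonneg (hpAnn a') (hpRnn a' _)) (Finset.mem_univ a))
  simp only [MI]
  simp only [key]
  rw [show (∑ a : F, ∑ b : F, (pA a * (pR a (b - a) * Real.log (pR a (b - a)))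
        - pA a * pR a (b - a) * Real.log (∑ a' : F, pA a' * pR a' (b - a'))))
      = (∑ a : F, ∑ b : F, pA a * (pR a (b - a) * Real.log (pR a (b - a))))
        - ∑ a : F, ∑ b : F, pA a * pR a (b - a)
            * Real.log (∑ a' : F, pA a' * pR a' (b - a')) by
    rw [← Finset.sum_sub_distrib]
    exact Finset.sum_congr rfl fun a _ => Finset.sum_sub_distrib _ _]
  have e1 : (∑ a : F, ∑ b : F, pA a * (pR a (b - a) * Real.log (pR a (b - a))))
      = s * (-Hq q pz0) + (1 - s) * (-Hq q pnz0) := by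
    simp only [← Finset.mul_sum]
    exact hT1
  have e2 : (∑ a : F, ∑ b : F, pA a * pR a (b - a)
      * Real.log (∑ a' : F, pA a' * pR a' (b - a'))) = -Hq q S := by
    rw [Finset.sum_comm]
    simp only [← Finset.sum_mul]
    exact hT2
  rw [e1, e2]
  ring
end

section
/- In the dependent sparse one-time pad with parameters p_z0, p_nz0, the mutual information I(R; A) equals H_q([S_R, (1-S_R)/(q-1), …]) − s·H_q([p_z0, (1-p_z0)/(q-1), …]) − (1-s)·H_q([p_nz0, (1-p_nz0)/(q-1), …]), where S_R = p_z0·s + (1-p_nz0)(1-s)/(q-1). -/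
open Finset

lemma sum_two (F : Type) [Fintype F] [DecidableEq F] (q : ℕ)
    (hcard : Fintype.card F = q) (r0 : F) (x y : ℝ) :
    ∑ r : F, (if r = r0 then x else y) = x + ((q : ℝ) - 1) * y := by
  have h : ∀ r : F, (if r = r0 then x else y) = (if r = r0 then x - y else 0) + y := by
    intro r; split <;> ring
  simp only [h, Finset.sum_add_distrib, Finset.sum_ite_eq' Finset.univ r0 (fun _ => x - y),
    Finset.mem_univ, if_true, Finset.sum_const, Finset.card_univ, hcard, nsmul_eq_mul]
  ring

lemma sum_three (F : Type) [Fintype F] [DecidableEq F] (q : ℕ)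
    (hcard : Fintype.card F = q) (a1 a2 : F) (h12 : a1 ≠ a2) (X Y Z : ℝ) :
    ∑ a : F, (if a = a1 then X else if a = a2 then Y else Z)
      = X + Y + ((q : ℝ) - 2) * Z := by
  have h : ∀ a : F, (if a = a1 then X else if a = a2 then Y else Z)
      = (if a = a1 then X - Z else 0) + (if a = a2 then Y - Z else 0) + Z := by
    intro a
    rcases eq_or_ne a a1 with rfl | h1
    · simp [h12, if_neg]
    · rcases eq_or_ne a a2 with rfl | h2
      · simp [h1]
      · simp [h1, h2]
  simp only [h, Finset.sum_add_distrib, Finset.sum_ite_eq' Finset.univ,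
    Finset.mem_univ, if_true, Finset.sum_const, Finset.card_univ, hcard, nsmul_eq_mul]
  ring

/-- In the dependent sparse one-time pad with parameters
`p_z0, p_nz0`, the leakage from the padding matrix is
`I(R; A) = H([S_R, …]) − s·H([p_z0, …]) − (1-s)·H([p_nz0, …])`
with `S_R = p_z0·s + (1-p_nz0)(1-s)/(q-1)`. -/
theorem leakage_from_padding_matrix
    (q : ℕ) (hq : 2 ≤ q) (F : Type) [Field F] [Fintype F] [DecidableEq F]
    (hcard : Fintype.card F = q)
    (s pz0 pnz0 : ℝ) (hs : s ∈ Set.Icc (0:ℝ) 1)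
    (hpz0 : pz0 ∈ Set.Icc (0:ℝ) 1) (hpnz0 : pnz0 ∈ Set.Icc (0:ℝ) 1)
    (pA : F → ℝ) (pR : F → F → ℝ)
    (hA0 : pA 0 = s)
    (hAnz : ∀ a : F, a ≠ 0 → pA a = (1 - s) / ((q : ℝ) - 1))
    (hR0 : ∀ r : F, pR 0 r = if r = 0 then pz0 else (1 - pz0) / ((q : ℝ) - 1))
    (hRnz : ∀ a : F, a ≠ 0 → ∀ r : F,
      pR a r = if r = -a then pnz0 else (1 - pnz0) / ((q : ℝ) - 1)) :
    MI (fun a r : F => pA a * pR a r)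
      = Hq q (pz0 * s + (1 - pnz0) * (1 - s) / ((q : ℝ) - 1))
        - s * Hq q pz0 - (1 - s) * Hq q pnz0 := by
  obtain ⟨hs0, hs1⟩ := hs
  obtain ⟨hz0, hz1⟩ := hpz0
  obtain ⟨hn0, hn1⟩ := hpnz0
  have hq2 : (2:ℝ) ≤ (q:ℝ) := by exact_mod_cast hq
  set c : ℝ := (q:ℝ) - 1 with hc
  have hcpos : 0 < c := by simp only [hc]; linarith
  have hcne : c ≠ 0 := ne_of_gt hcpos
  -- nonnegativity
  have hpAnn : ∀ a : F, 0 ≤ pA a := by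
    intro a
    rcases eq_or_ne a 0 with rfl | ha
    · rw [hA0]; exact hs0
    · rw [hAnz a ha]; exact div_nonneg (by linarith) (le_of_lt hcpos)
  have hpRnn : ∀ a r : F, 0 ≤ pR a r := by
    intro a r
    rcases eq_or_ne a 0 with rfl | ha
    · rw [hR0 r]; split
      · exact hz0
      · exact div_nonneg (by linarith) (le_of_lt hcpos)
    · rw [hRnz a ha r]; split
      · exact hn0
      · exact div_nonneg (by linarith) (le_of_lt hcpos)
  -- row sums
  have hrow : ∀ a : F, ∑ r : F, pR a r = 1 := by
    intro a
    rcases eq_or_ne a 0 with rfl | ha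
    · have : ∀ r : F, pR 0 r = if r = 0 then pz0 else (1 - pz0) / c := hR0
      rw [Finset.sum_congr rfl (fun r _ => this r), sum_two F q hcard 0 pz0 _]
      field_simp
      rw [hc]; ring
    · have : ∀ r : F, pR a r = if r = (-a) then pnz0 else (1 - pnz0) / c := hRnz a ha
      rw [Finset.sum_congr rfl (fun r _ => this r), sum_two F q hcard (-a) pnz0 _]
      field_simp
      rw [hc]; ring
  set SR : ℝ := pz0 * s + (1 - pnz0) * (1 - s) / c with hSR
  have hq1 : (q:ℝ) - 1 ≠ 0 := ne_of_gt (by linarith)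
  have hPR : ∀ r : F, (∑ a : F, pA a * pR a r) = if r = 0 then SR else (1 - SR) / c := by
    intro r
    rcases eq_or_ne r 0 with rfl | hr
    · have h1 : ∀ a : F, pA a * pR a 0
          = if a = 0 then s * pz0 else ((1 - s) / c) * ((1 - pnz0) / c) := by
        intro a
        rcases eq_or_ne a 0 with rfl | ha
        · simp [hA0, hR0]
        · rw [if_neg ha, hAnz a ha, hRnz a ha 0, if_neg]
          intro h
          exact ha (neg_eq_zero.mp h.symm)
      rw [Finset.sum_congr rfl (fun a _ => h1 a), sum_two F q hcard 0 _ _]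
      simp only [if_pos rfl, ↓reduceIte, hSR, hc]
      field_simp
    · have hne : (0:F) ≠ -r := by
        intro h
        exact hr (neg_eq_zero.mp h.symm)
      have h1 : ∀ a : F, pA a * pR a r
          = if a = 0 then s * ((1 - pz0) / c)
            else if a = -r then ((1 - s) / c) * pnz0
            else ((1 - s) / c) * ((1 - pnz0) / c) := by
        intro a
        rcases eq_or_ne a 0 with rfl | ha
        · rw [if_pos rfl, hA0, hR0, if_neg hr]
        · rw [if_neg ha, hAnz a ha, hRnz a ha r]
          rcases eq_or_ne a (-r) with rfl | ha2
          · rw [if_pos rfl, if_pos (by rw [neg_neg])]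
          · rw [if_neg ha2, if_neg]
            intro h
            exact ha2 (by rw [h, neg_neg])
      rw [Finset.sum_congr rfl (fun a _ => h1 a), sum_three F q hcard 0 (-r) hne _ _ _,
        if_neg hr]
      simp only [hSR, hc]
      field_simp
      ring
  have hmarg : ∀ a : F, ∑ r : F, pA a * pR a r = pA a := by
    intro a; rw [← Finset.mul_sum, hrow a, mul_one]
  have key : ∀ a r : F,
      pA a * pR a r *
          Real.log (pA a * pR a r /
            ((∑ r' : F, pA a * pR a r') * (∑ a' : F, pA a' * pR a' r)))
        = pA a * (pR a r * Real.log (pR a r))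
          - pA a * pR a r * Real.log (∑ a' : F, pA a' * pR a' r) := by
    intro a r
    rw [hmarg a]
    rcases eq_or_ne (pA a) 0 with ha | ha
    · simp [ha]
    rcases eq_or_ne (pR a r) 0 with hr2 | hr2
    · simp [hr2]
    have hApos : 0 < pA a := lt_of_le_of_ne (hpAnn a) (Ne.symm ha)
    have hRpos : 0 < pR a r := lt_of_le_of_ne (hpRnn a r) (Ne.symm hr2)
    have hPRpos : 0 < ∑ a' : F, pA a' * pR a' r :=
      lt_of_lt_of_le (mul_pos hApos hRpos)
        (Finset.single_le_sum (fun a' _ => mul_nonneg (hpAnn a') (hpRnn a' r))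
          (Finset.mem_univ a))
    rw [mul_div_mul_left _ _ ha, Real.log_div hr2 (ne_of_gt hPRpos)]
    ring
  have hCA : ∑ r : F, pR 0 r * Real.log (pR 0 r) = -Hq q pz0 := by
    have h1 : ∀ r : F, pR 0 r * Real.log (pR 0 r)
        = if r = 0 then pz0 * Real.log pz0
          else ((1 - pz0) / c) * Real.log ((1 - pz0) / c) := by
      intro r; rw [hR0 r]; split <;> rfl
    rw [Finset.sum_congr rfl (fun r _ => h1 r), sum_two F q hcard 0 _ _]
    simp only [Hq, hc]
    ring
  have hCnz : ∀ a : F, a ≠ 0 → ∑ r : F, pR a r * Real.log (pR a r) = -Hq q pnz0 := by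
    intro a ha
    have h1 : ∀ r : F, pR a r * Real.log (pR a r)
        = if r = -a then pnz0 * Real.log pnz0
          else ((1 - pnz0) / c) * Real.log ((1 - pnz0) / c) := by
      intro r; rw [hRnz a ha r]; split <;> rfl
    rw [Finset.sum_congr rfl (fun r _ => h1 r), sum_two F q hcard (-a) _ _]
    simp only [Hq, hc]
    ring
  have hfirst : ∑ a : F, pA a * ∑ r : F, pR a r * Real.log (pR a r)
      = -(s * Hq q pz0) - (1 - s) * Hq q pnz0 := by
    have h1 : ∀ a : F, pA a * ∑ r : F, pR a r * Real.log (pR a r)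
        = if a = 0 then s * (-Hq q pz0) else ((1 - s) / c) * (-Hq q pnz0) := by
      intro a
      rcases eq_or_ne a 0 with rfl | ha
      · rw [if_pos rfl, hA0, hCA]
      · rw [if_neg ha, hAnz a ha, hCnz a ha]
    rw [Finset.sum_congr rfl (fun a _ => h1 a), sum_two F q hcard 0 _ _]
    simp only [hc]
    field_simp
    ring
  have hsecond : ∑ r : F, (∑ a : F, pA a * pR a r)
        * Real.log (∑ a : F, pA a * pR a r) = -Hq q SR := by
    have h1 : ∀ r : F, (∑ a : F, pA a * pR a r) * Real.log (∑ a : F, pA a * pR a r)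
        = if r = 0 then SR * Real.log SR
          else ((1 - SR) / c) * Real.log ((1 - SR) / c) := by
      intro r; rw [hPR r]; split <;> rfl
    rw [Finset.sum_congr rfl (fun r _ => h1 r), sum_two F q hcard 0 _ _]
    simp only [Hq, hc]
    ring
  have hMI : MI (fun a r : F => pA a * pR a r)
      = (∑ a : F, ∑ r : F,
          (pA a * (pR a r * Real.log (pR a r))
            - pA a * pR a r * Real.log (∑ a' : F, pA a' * pR a' r))) := by
    unfold MI
    exact Finset.sum_congr rfl fun a _ => Finset.sum_congr rfl fun r _ => key a r
  rw [hMI]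
  simp only [Finset.sum_sub_distrib]
  rw [Finset.sum_comm (f := fun a r => pA a * pR a r * Real.log (∑ a' : F, pA a' * pR a' r))]
  have h2 : ∀ r : F, ∑ a : F, pA a * pR a r * Real.log (∑ a' : F, pA a' * pR a' r)
      = (∑ a : F, pA a * pR a r) * Real.log (∑ a : F, pA a * pR a r) := by
    intro r; rw [← Finset.sum_mul]
  have h3 : ∀ a : F, ∑ r : F, pA a * (pR a r * Real.log (pR a r))
      = pA a * ∑ r : F, pR a r * Real.log (pR a r) := by
    intro a; rw [← Finset.mul_sum]
  rw [Finset.sum_congr rfl (fun r _ => h2 r), Finset.sum_congr rfl (fun a _ => h3 a),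
    hfirst, hsecond]
  ring
end

section
/- In the cyclic repetition scheme with N workers and α layers (each task replicated to α consecutive workers, one per layer, workers compute layers sequentially), any K = (−α² + α(2N−1))/2 + 1 completed subtask computations suffice for the chief to recover all N distinct task results. -/
open Finset

private lemma csum_aux (N α : ℕ) (hα : 0 < α) (hαN : α ≤ N) :
    2 * ∑ d ∈ range N, min α d = α * (2 * N - 1 - α) := by
  obtain ⟨m, rfl⟩ := Nat.exists_eq_add_of_le hαN
  obtain ⟨a, rfl⟩ := Nat.exists_eq_add_of_le hα
  rw [show range (1 + a + m) = range (1 + a) ∪ Ico (1 + a) (1 + a + m) by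
    rw [Finset.range_eq_Ico, Finset.range_eq_Ico, Finset.Ico_union_Ico_eq_Ico (by omega) (by omega)]]
  rw [Finset.sum_union (by
    rw [Finset.range_eq_Ico]
    exact Finset.Ico_disjoint_Ico_consecutive 0 (1 + a) (1 + a + m))]
  have h1 : ∑ d ∈ range (1 + a), min (1 + a) d = ∑ d ∈ range (1 + a), d := by
    apply Finset.sum_congr rfl
    intro d hd
    simp only [Finset.mem_range] at hd
    omega
  have h2 : ∑ d ∈ Ico (1 + a) (1 + a + m), min (1 + a) d
      = ∑ _d ∈ Ico (1 + a) (1 + a + m), (1 + a) := by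
    apply Finset.sum_congr rfl
    intro d hd
    simp only [Finset.mem_Ico] at hd
    omega
  rw [h1, h2, Finset.sum_const, Nat.card_Ico]
  have h3 := Finset.sum_range_id_mul_two (1 + a)
  have h4 : 2 * (1 + a + m) - 1 - (1 + a) = a + 2 * m := by omega
  rw [h4]
  have h5 : (1 + a) * (1 + a - 1) = (1 + a) * a := by
    congr 1
    omega
  rw [h5] at h3
  have h6 : 1 + a + m - (1 + a) = m := by omega
  rw [h6, smul_eq_mul]
  show 2 * (∑ d ∈ range (1 + a), d + m * (1 + a)) = (1 + a) * (a + 2 * m)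
  nlinarith [h3]

/-- In the cyclic repetition scheme with `N` workers and `α`
layers (worker `k` computes at layer `b`, `0 ≤ b < α`, the task indexed
`k - b ∈ ZMod N`, and workers finish layers in order), any
`K = α(2N − 1 − α)/2 + 1` completed subtask computations cover all `N`
distinct tasks.  Here `c k` is the number of layers completed by worker `k`. -/
theorem cyclic_scheme_partial_straggler_tolerance
    (N α : ℕ) (hα : 0 < α) (hαN : α ≤ N) [NeZero N]
    (c : Fin N → ℕ) (hc : ∀ k, c k ≤ α)
    (hsum : α * (2 * N - 1 - α) / 2 + 1 ≤ ∑ k, c k) :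
    ∀ i : ZMod N, ∃ k : Fin N, ∃ b : ℕ, b < c k ∧
      ((k : ℕ) : ZMod N) - (b : ZMod N) = i := by
  intro i
  by_contra hcon
  push_neg at hcon
  -- each worker k contributes at most min α (((k:ZMod N) - i).val)
  have key : ∀ k : Fin N, c k ≤ min α ((((k : ℕ) : ZMod N) - i).val) := by
    intro k
    refine le_min (hc k) ?_
    by_contra hlt
    push_neg at hlt
    refine hcon k ((((k : ℕ) : ZMod N) - i).val) hlt ?_
    rw [ZMod.natCast_val, ZMod.cast_id]
    ring
  -- the map k ↦ (k : ZMod N) - i is a bijection Fin N → ZMod N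
  have hbij : Function.Bijective (fun k : Fin N => ((k : ℕ) : ZMod N) - i) := by
    rw [Fintype.bijective_iff_injective_and_card]
    refine ⟨?_, by simp [ZMod.card]⟩
    intro a b hab
    simp only at hab
    have : ((a : ℕ) : ZMod N) = ((b : ℕ) : ZMod N) := by
      have := congrArg (· + i) hab
      simpa using this
    have hv := congrArg ZMod.val this
    rwa [ZMod.val_natCast_of_lt a.isLt, ZMod.val_natCast_of_lt b.isLt,
      Fin.val_inj] at hv
  have hsum2 : ∑ k : Fin N, min α ((((k : ℕ) : ZMod N) - i).val)
      = ∑ j : ZMod N, min α j.val :=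
    Fintype.sum_bijective _ hbij _ _ (fun k => rfl)
  have hsum3 : ∑ j : ZMod N, min α j.val = ∑ d ∈ range N, min α d := by
    refine Finset.sum_nbij' (fun j => j.val) (fun d => (d : ZMod N)) ?_ ?_ ?_ ?_ ?_ <;>
      intros <;> simp_all [ZMod.val_lt, ZMod.natCast_val, ZMod.val_natCast_of_lt, ZMod.cast_id, Nat.mod_eq_of_lt]
  have hle : ∑ k, c k ≤ α * (2 * N - 1 - α) / 2 := by
    calc ∑ k, c k ≤ ∑ k : Fin N, min α ((((k : ℕ) : ZMod N) - i).val) :=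
          Finset.sum_le_sum fun k _ => key k
      _ = ∑ d ∈ range N, min α d := by rw [hsum2, hsum3]
      _ = α * (2 * N - 1 - α) / 2 := by
          have := csum_aux N α hα hαN
          omega
  omega
end
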